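/- Fix data points (x_i, y_i) ∈ ℝ^p × ℝ, i = 1,…,n, an integer K ≥ 2, σ² > 0, and λ ≥ 0. Let θ^{(t)} = (ω^{(t)}, β^{(t)}) with ω^{(t)} in the open probability simplex (ω_k^{(t)} > 0, Σ_k ω_k^{(t)} = 1) and β_k^{(t)} ∈ ℝ^p. Define the responsibilities η_{i,k} = ω_k^{(t)} φ_{σ²}(y_i − x_i^T β_k^{(t)}) / Σ_{k'=1}^K ω_{k'}^{(t)} φ_{σ²}(y_i − x_i^T β_{k'}^{(t)}) and the Q-function Q(θ | θ^{(t)}) = −(1/(2n)) Σ_{i=1}^n Σ_{k=1}^K η_{i,k} (y_i − x_i^T β_k)² + (1/n) Σ_{i=1}^n Σ_{k=1}^K η_{i,k} log(ω_k). Suppose θ^{(t+1)} = (ω^{(t+1)}, β^{(t+1)}) maximizes 2Q(θ | θ^{(t)}) − λ Σ_{j=1}^p √(Σ_{k=1}^K β_{kj}²) over all θ = (ω, β) with ω in the open probability simplex and β ∈ (ℝ^p)^K. Then F(θ^{(t+1)}) ≥ F(θ^{(t)}), where F(θ) = (1/n) Σ_{i=1}^n log(Σ_{k=1}^K ω_k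 φ_{σ²}(y_i − x_i^T β_k)) − (λ/(2σ²)) Σ_{j=1}^p √(Σ_{k=1}^K β_{kj}²). In particular, with σ² = 1 the sequence of iterates of the group-lasso penalized EM algorithm with fixed tuning parameter λ monotonically increases the penalized conditional log-likelihood L(θ) − (λ/2) Σ_{j=1}^p √(Σ_{k=1}^K β_{kj}²). -/
import Mathlib


open Real Finset Matrix

noncomputable section

/-- Density of `N(0, σ²)`. -/
def normalPDF (σ2 : ℝ) (u : ℝ) : ℝ :=
  (2 * π * σ2) ^ (-(1 : ℝ) / 2) * Real.exp (-u ^ 2 / (2 * σ2))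

/-- Parameter of the `K`-mixture linear regression in `ℝ^p`:
mixing weights together with the `K` coefficient vectors. -/
abbrev MixParam (K p : ℕ) := (Fin K → ℝ) × (Fin K → Fin p → ℝ)

/-- The open probability simplex condition on the weights. -/
def InSimplex {K p : ℕ} (θ : MixParam K p) : Prop :=
  (∀ k, 0 < θ.1 k) ∧ ∑ k, θ.1 k = 1

/-- E-step responsibilities `η_{i,k}` computed at `θt`. -/
def resp {n K p : ℕ} (x : Fin n → Fin p → ℝ) (y : Fin n → ℝ) (σ2 : ℝ)
    (θt : MixParam K p) (i : Fin n) (k : Fin K) : ℝ :=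
  θt.1 k * normalPDF σ2 (y i - x i ⬝ᵥ θt.2 k) /
    ∑ k' : Fin K, θt.1 k' * normalPDF σ2 (y i - x i ⬝ᵥ θt.2 k')

/-- The Q-function `Q(θ ∣ θt)` of the EM algorithm. -/
def Qfun {n K p : ℕ} (x : Fin n → Fin p → ℝ) (y : Fin n → ℝ) (σ2 : ℝ)
    (θt θ : MixParam K p) : ℝ :=
  -(1 / (2 * (n : ℝ))) * ∑ i, ∑ k, resp x y σ2 θt i k * (y i - x i ⬝ᵥ θ.2 k) ^ 2
    + (1 / (n : ℝ)) * ∑ i, ∑ k, resp x y σ2 θt i k * Real.log (θ.1 k)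

/-- The group-lasso penalty `Σ_j √(Σ_k β_{kj}²)`. -/
def groupPen {K p : ℕ} (β : Fin K → Fin p → ℝ) : ℝ :=
  ∑ j : Fin p, Real.sqrt (∑ k : Fin K, β k j ^ 2)

/-- The penalized (scaled) conditional log-likelihood
`F(θ) = (1/n) Σᵢ log (Σ_k ω_k φ_{σ²}(yᵢ − xᵢᵀβ_k)) − (λ/(2σ²))·groupPen β`. -/
def penLogLik {n K p : ℕ} (x : Fin n → Fin p → ℝ) (y : Fin n → ℝ) (σ2 lam : ℝ)
    (θ : MixParam K p) : ℝ :=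
  (1 / (n : ℝ)) * ∑ i, Real.log (∑ k, θ.1 k * normalPDF σ2 (y i - x i ⬝ᵥ θ.2 k))
    - lam / (2 * σ2) * groupPen θ.2

lemma normalPDF_pos {σ2 : ℝ} (h : 0 < σ2) (u : ℝ) : 0 < normalPDF σ2 u := by
  have hπ := Real.pi_pos
  unfold normalPDF
  positivity

lemma log_normalPDF {σ2 : ℝ} (h : 0 < σ2) (u : ℝ) :
    Real.log (normalPDF σ2 u) = (-(1:ℝ)/2) * Real.log (2*π*σ2) - u^2/(2*σ2) := by
  have hπ := Real.pi_pos
  have h2 : (0:ℝ) < 2*π*σ2 := by positivity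
  rw [normalPDF, Real.log_mul (by positivity) (Real.exp_ne_zero _), Real.log_rpow h2,
    Real.log_exp]
  ring


/-- Monotonicity of the group-lasso penalized EM algorithm: if
`θt1` maximizes `2Q(· ∣ θt) − λ·groupPen` over parameters with weights in the open
probability simplex, then the penalized conditional log-likelihood does not decrease. -/
theorem penalized_EM_monotone
    (n K p : ℕ) (hK : 2 ≤ K)
    (x : Fin n → Fin p → ℝ) (y : Fin n → ℝ)
    (σ2 lam : ℝ) (hσ2 : 0 < σ2) (hlam : 0 ≤ lam)
    (θt θt1 : MixParam K p)
    (hθt : InSimplex θt) (hθt1 : InSimplex θt1)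
    (hmax : ∀ θ : MixParam K p, InSimplex θ →
      2 * Qfun x y σ2 θt θ - lam * groupPen θ.2 ≤
        2 * Qfun x y σ2 θt θt1 - lam * groupPen θt1.2) :
    penLogLik x y σ2 lam θt ≤ penLogLik x y σ2 lam θt1 := by
  classical
  have hπ := Real.pi_pos
  set N : ℝ := (n : ℝ) with hN
  set η : Fin n → Fin K → ℝ := resp x y σ2 θt with hηdef
  have hane : ∀ (θ : MixParam K p), InSimplex θ → ∀ (i : Fin n) (k : Fin K),
      0 < θ.1 k * normalPDF σ2 (y i - x i ⬝ᵥ θ.2 k) :=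
    fun θ hθ i k => mul_pos (hθ.1 k) (normalPDF_pos hσ2 _)
  have hKne : (Finset.univ : Finset (Fin K)).Nonempty :=
    ⟨⟨0, by omega⟩, Finset.mem_univ _⟩
  have hspos : ∀ (θ : MixParam K p), InSimplex θ → ∀ i : Fin n,
      0 < ∑ k, θ.1 k * normalPDF σ2 (y i - x i ⬝ᵥ θ.2 k) :=
    fun θ hθ i => Finset.sum_pos (fun k _ => hane θ hθ i k) hKne
  have hηeq : ∀ i k, η i k = (θt.1 k * normalPDF σ2 (y i - x i ⬝ᵥ θt.2 k)) /
      (∑ k', θt.1 k' * normalPDF σ2 (y i - x i ⬝ᵥ θt.2 k')) := fun i k => rfl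
  have hηpos : ∀ i k, 0 < η i k := fun i k => by
    rw [hηeq]; exact div_pos (hane θt hθt i k) (hspos θt hθt i)
  have hηsum : ∀ i, ∑ k, η i k = 1 := by
    intro i
    simp_rw [hηeq]
    rw [← Finset.sum_div]
    exact div_self (hspos θt hθt i).ne'
  -- Jensen's inequality, per data point
  have jensen : ∀ (θ : MixParam K p), InSimplex θ → ∀ i : Fin n,
      ∑ k, η i k * (Real.log (θ.1 k * normalPDF σ2 (y i - x i ⬝ᵥ θ.2 k))
        - Real.log (η i k))
      ≤ Real.log (∑ k, θ.1 k * normalPDF σ2 (y i - x i ⬝ᵥ θ.2 k)) := by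
    intro θ hθ i
    have h := (strictConcaveOn_log_Ioi.concaveOn).le_map_sum
      (t := Finset.univ) (w := η i)
      (p := fun k => (θ.1 k * normalPDF σ2 (y i - x i ⬝ᵥ θ.2 k)) / η i k)
      (fun k _ => (hηpos i k).le) (hηsum i)
      (fun k _ => Set.mem_Ioi.2 (div_pos (hane θ hθ i k) (hηpos i k)))
    simp only [smul_eq_mul] at h
    calc ∑ k, η i k * (Real.log (θ.1 k * normalPDF σ2 (y i - x i ⬝ᵥ θ.2 k))
          - Real.log (η i k))
        = ∑ k, η i k * Real.log ((θ.1 k * normalPDF σ2 (y i - x i ⬝ᵥ θ.2 k)) / η i k) := by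
          refine Finset.sum_congr rfl fun k _ => ?_
          rw [Real.log_div (hane θ hθ i k).ne' (hηpos i k).ne']
      _ ≤ Real.log (∑ k, η i k * ((θ.1 k * normalPDF σ2 (y i - x i ⬝ᵥ θ.2 k)) / η i k)) := h
      _ = Real.log (∑ k, θ.1 k * normalPDF σ2 (y i - x i ⬝ᵥ θ.2 k)) := by
          congr 1
          exact Finset.sum_congr rfl fun k _ => mul_div_cancel₀ _ (hηpos i k).ne'
  -- equality at θt
  have eqt : ∀ i : Fin n,
      Real.log (∑ k, θt.1 k * normalPDF σ2 (y i - x i ⬝ᵥ θt.2 k))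
      = ∑ k, η i k * (Real.log (θt.1 k * normalPDF σ2 (y i - x i ⬝ᵥ θt.2 k))
        - Real.log (η i k)) := by
    intro i
    have step : ∀ k ∈ Finset.univ, η i k * (Real.log (θt.1 k * normalPDF σ2 (y i - x i ⬝ᵥ θt.2 k))
        - Real.log (η i k))
        = η i k * Real.log (∑ k', θt.1 k' * normalPDF σ2 (y i - x i ⬝ᵥ θt.2 k')) := by
      intro k _
      congr 1
      rw [hηeq, Real.log_div (hane θt hθt i k).ne' (hspos θt hθt i).ne']
      ring
    rw [Finset.sum_congr rfl step, ← Finset.sum_mul, hηsum i, one_mul]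
  -- expansion of the inner sum
  have expand : ∀ (θ : MixParam K p), InSimplex θ → ∀ i : Fin n,
      ∑ k, η i k * (Real.log (θ.1 k * normalPDF σ2 (y i - x i ⬝ᵥ θ.2 k))
        - Real.log (η i k))
      = (∑ k, η i k * Real.log (θ.1 k)) + (-(1:ℝ)/2) * Real.log (2*π*σ2)
        - (1/(2*σ2)) * (∑ k, η i k * (y i - x i ⬝ᵥ θ.2 k)^2)
        - ∑ k, η i k * Real.log (η i k) := by
    intro θ hθ i
    have step : ∀ k ∈ Finset.univ, η i k * (Real.log (θ.1 k * normalPDF σ2 (y i - x i ⬝ᵥ θ.2 k))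
        - Real.log (η i k))
        = η i k * Real.log (θ.1 k) + η i k * ((-(1:ℝ)/2) * Real.log (2*π*σ2))
          - (1/(2*σ2)) * (η i k * (y i - x i ⬝ᵥ θ.2 k)^2)
          - η i k * Real.log (η i k) := by
      intro k _
      rw [Real.log_mul (hθ.1 k).ne' (normalPDF_pos hσ2 _).ne', log_normalPDF hσ2]
      field_simp
      ring
    rw [Finset.sum_congr rfl step, Finset.sum_sub_distrib, Finset.sum_sub_distrib,
      Finset.sum_add_distrib, ← Finset.sum_mul, hηsum i, ← Finset.mul_sum]
    ring
  -- global inequality / equality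
  have key : ∀ (θ : MixParam K p), InSimplex θ →
      (∑ i, ∑ k, η i k * Real.log (θ.1 k)) + N * ((-(1:ℝ)/2) * Real.log (2*π*σ2))
        - (1/(2*σ2)) * (∑ i, ∑ k, η i k * (y i - x i ⬝ᵥ θ.2 k)^2)
        - (∑ i, ∑ k, η i k * Real.log (η i k))
      ≤ ∑ i, Real.log (∑ k, θ.1 k * normalPDF σ2 (y i - x i ⬝ᵥ θ.2 k)) := by
    intro θ hθ
    have h1 := Finset.sum_le_sum (fun i (_ : i ∈ Finset.univ) =>
      (expand θ hθ i) ▸ jensen θ hθ i)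
    rw [Finset.sum_sub_distrib, Finset.sum_sub_distrib, Finset.sum_add_distrib,
      Finset.sum_const, ← Finset.mul_sum] at h1
    simpa [Finset.card_univ, nsmul_eq_mul, hN, Finset.mul_sum] using h1
  have keyt : (∑ i, ∑ k, η i k * Real.log (θt.1 k)) + N * ((-(1:ℝ)/2) * Real.log (2*π*σ2))
        - (1/(2*σ2)) * (∑ i, ∑ k, η i k * (y i - x i ⬝ᵥ θt.2 k)^2)
        - (∑ i, ∑ k, η i k * Real.log (η i k))
      = ∑ i, Real.log (∑ k, θt.1 k * normalPDF σ2 (y i - x i ⬝ᵥ θt.2 k)) := by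
    have h1 : ∀ i ∈ Finset.univ,
        Real.log (∑ k, θt.1 k * normalPDF σ2 (y i - x i ⬝ᵥ θt.2 k))
        = (∑ k, η i k * Real.log (θt.1 k)) + (-(1:ℝ)/2) * Real.log (2*π*σ2)
          - (1/(2*σ2)) * (∑ k, η i k * (y i - x i ⬝ᵥ θt.2 k)^2)
          - ∑ k, η i k * Real.log (η i k) :=
      fun i _ => (eqt i).trans (expand θt hθt i)
    rw [Finset.sum_congr rfl h1, Finset.sum_sub_distrib, Finset.sum_sub_distrib,
      Finset.sum_add_distrib, Finset.sum_const, ← Finset.mul_sum]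
    simp [Finset.card_univ, nsmul_eq_mul, hN, Finset.mul_sum]
  -- M-step separation
  have hA := hmax (θt1.1, θt.2) (by exact ⟨hθt1.1, hθt1.2⟩)
  have hB := hmax (θt.1, θt1.2) (by exact ⟨hθt.1, hθt.2⟩)
  simp only [Qfun, ← hηdef] at hA hB
  -- final combination
  have hc1 : (0:ℝ) ≤ 1 / N := by positivity
  have hiσ : (0:ℝ) ≤ 1 / (2*σ2) := by positivity
  have hA' : (1/N) * (∑ i, ∑ k, η i k * (y i - x i ⬝ᵥ θt1.2 k)^2)
      + lam * groupPen θt1.2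
      ≤ (1/N) * (∑ i, ∑ k, η i k * (y i - x i ⬝ᵥ θt.2 k)^2)
      + lam * groupPen θt.2 := by
    have hc : (1:ℝ)/(2*N) = (1/N)/2 := by rw [div_div, mul_comm]
    rw [← hN, hc] at hA
    linarith
  have hB' : (1/N) * (∑ i, ∑ k, η i k * Real.log (θt.1 k))
      ≤ (1/N) * (∑ i, ∑ k, η i k * Real.log (θt1.1 k)) := by linarith
  have hA2 := mul_le_mul_of_nonneg_left hA' hiσ
  have hkey1 := mul_le_mul_of_nonneg_left (key θt1 hθt1) hc1
  have hkeyt := congrArg (fun z => (1/N) * z) keyt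
  simp only [penLogLik, ← hN]
  set T0 := ∑ i, ∑ k, η i k * (y i - x i ⬝ᵥ θt.2 k)^2 with hT0
  set T1 := ∑ i, ∑ k, η i k * (y i - x i ⬝ᵥ θt1.2 k)^2 with hT1
  set L0 := ∑ i, ∑ k, η i k * Real.log (θt.1 k) with hL0
  set L1 := ∑ i, ∑ k, η i k * Real.log (θt1.1 k) with hL1
  set CC := ∑ i, ∑ k, η i k * Real.log (η i k) with hCC
  set S0 := ∑ i, Real.log (∑ k, θt.1 k * normalPDF σ2 (y i - x i ⬝ᵥ θt.2 k)) with hS0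
  set S1 := ∑ i, Real.log (∑ k, θt1.1 k * normalPDF σ2 (y i - x i ⬝ᵥ θt1.2 k)) with hS1
  set P0 := groupPen θt.2 with hP0
  set P1 := groupPen θt1.2 with hP1
  ring_nf at hkey1 hkeyt hA2 hB' ⊢
  linarith [hkey1, hkeyt, hA2, hB']
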